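/- arXiv:2502.19992 — 3 statements merged into one kernel-verified Lean document; each statement's English description precedes it below -/
import Mathlib

section
/- A finite simple graph G is a permutation graph if and only if G admits a cohesive order, i.e., a labeling of its vertex set by [n] = {1,...,n} such that (i) if i < j < k and {i,j} ∈ E(G) and {j,k} ∈ E(G), then {i,k} ∈ E(G), and (ii) if i < j < k and {i,k} ∈ E(G), then {i,j} ∈ E(G) or {j,k} ∈ E(G). -/
/-! The edges of `G(σ)` are exactly the inversions of `σ`, so `σ` can be read off the graph:
`i` is listed before `j` iff either `i < j` and `{i,j}` is a non-edge, or `j < i` and `{i,j}` is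
an edge. Condition (i) of a cohesive order makes this relation transitive along edges and
condition (ii) along non-edges, so it is a strict total order on `[n]`; numbering `[n]` along
it produces a permutation `σ` with `G = G(σ)`. Conversely, the natural labeling of `G(σ)` is
cohesive because inversions compose along decreasing chains. -/

/-- The permutation graph `G(σ)` of a permutation `σ` of `Fin n`:
`i` and `j` with `i < j` are adjacent iff `j` appears before `i` in the list
`σ 1, …, σ n`. -/
def permGraph {n : ℕ} (σ : Equiv.Perm (Fin n)) : SimpleGraph (Fin n) where
  Adj i j := (i < j ∧ σ.symm j < σ.symm i) ∨ (j < i ∧ σ.symm i < σ.symm j)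
  symm := ⟨fun i j h => Or.symm h⟩
  loopless := ⟨fun i h => by rcases h with ⟨h, -⟩ | ⟨h, -⟩ <;> exact absurd h (lt_irrefl i)⟩

/-- A finite simple graph is a permutation graph if it is isomorphic to `G(σ)` for some
permutation `σ`. -/
def IsPermutationGraph {V : Type*} (G : SimpleGraph V) [Fintype V] : Prop :=
  ∃ σ : Equiv.Perm (Fin (Fintype.card V)), Nonempty (G ≃g permGraph σ)

/-- A graph has a cohesive order if its vertex set can be labeled by `[n]` so that:
(i) if `i < j < k` and `{i,j}, {j,k} ∈ E(G)` then `{i,k} ∈ E(G)`, and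
(ii) if `i < j < k` and `{i,k} ∈ E(G)` then `{i,j} ∈ E(G)` or `{j,k} ∈ E(G)`. -/
def HasCohesiveOrder {V : Type*} (G : SimpleGraph V) [Fintype V] : Prop :=
  ∃ e : V ≃ Fin (Fintype.card V),
    (∀ i j k : Fin (Fintype.card V), i < j → j < k →
      G.Adj (e.symm i) (e.symm j) → G.Adj (e.symm j) (e.symm k) →
        G.Adj (e.symm i) (e.symm k)) ∧
    (∀ i j k : Fin (Fintype.card V), i < j → j < k →
      G.Adj (e.symm i) (e.symm k) →
        (G.Adj (e.symm i) (e.symm j) ∨ G.Adj (e.symm j) (e.symm k)))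

namespace SimpleGraph

variable {α : Type*} [LinearOrder α]

structure IsCohesive (H : SimpleGraph α) : Prop where
  adj_trans : ∀ i j k, i < j → j < k → H.Adj i j → H.Adj j k → H.Adj i k
  adj_or_adj_of_adj : ∀ i j k, i < j → j < k → H.Adj i k → H.Adj i j ∨ H.Adj j k

def ListedBefore (H : SimpleGraph α) (i j : α) : Prop :=
  (i < j ∧ ¬ H.Adj i j) ∨ (j < i ∧ H.Adj i j)

theorem listedBefore_iff_adj_of_lt {H : SimpleGraph α} {i j : α} (h : i < j) :
    H.ListedBefore j i ↔ H.Adj i j := by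
  simp [ListedBefore, h, h.not_gt, adj_comm]

theorem IsCohesive.listedBefore_trans {H : SimpleGraph α} (hH : H.IsCohesive) {a b c : α}
    (hab : H.ListedBefore a b) (hbc : H.ListedBefore b c) : H.ListedBefore a c := by
  obtain ⟨adj_trans, adj_or_adj⟩ := hH
  rcases hab with ⟨hab, nab⟩ | ⟨hba, ab⟩ <;> rcases hbc with ⟨hbc, nbc⟩ | ⟨hcb, bc⟩
  · exact .inl ⟨hab.trans hbc, fun ac => (adj_or_adj a b c hab hbc ac).elim nab nbc⟩
  · rcases lt_trichotomy a c with hac | rfl | hca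
    · exact .inl ⟨hac, fun ac => nab (adj_trans a c b hac hcb ac bc.symm)⟩
    · exact absurd bc.symm nab
    · exact .inr ⟨hca, ((adj_or_adj c a b hca hab bc.symm).resolve_right nab).symm⟩
  · rcases lt_trichotomy a c with hac | rfl | hca
    · exact .inl ⟨hac, fun ac => nbc (adj_trans b a c hba hac ab.symm ac)⟩
    · exact absurd ab.symm nbc
    · exact .inr ⟨hca, ((adj_or_adj b c a hbc hca ab.symm).resolve_left nbc).symm⟩
  · exact .inr ⟨hcb.trans hba, (adj_trans c b a hcb hba bc.symm ab.symm).symm⟩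

theorem IsCohesive.isStrictTotalOrder_listedBefore {H : SimpleGraph α} (hH : H.IsCohesive) :
    IsStrictTotalOrder α H.ListedBefore where
  trichotomous a b := by
    unfold ListedBefore
    rcases lt_trichotomy a b with h | h | h <;> by_cases hab : H.Adj a b <;>
      simp [h, h.not_gt, hab, adj_comm, ne_of_lt, ne_of_gt]
  irrefl a := by simp [ListedBefore]
  trans _ _ _ := hH.listedBefore_trans

end SimpleGraph

theorem exists_equiv_fin_lt_iff_of_isStrictTotalOrder {α : Type*} [Fintype α] {n : ℕ}
    (hα : Fintype.card α = n) (r : α → α → Prop) [IsStrictTotalOrder α r] :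
    ∃ f : α ≃ Fin n, ∀ a b, r a b ↔ f a < f b := by
  classical
  let _ := linearOrderOfSTO r
  exact ⟨(Fintype.orderIsoFinOfCardEq α hα).symm.toEquiv, fun a b =>
    (Fintype.orderIsoFinOfCardEq α hα).symm.lt_iff_lt.symm⟩

theorem permGraph_adj_of_lt {n : ℕ} (σ : Equiv.Perm (Fin n)) {i j : Fin n} (h : i < j) :
    (permGraph σ).Adj i j ↔ σ.symm j < σ.symm i := by
  simp [permGraph, h, h.not_gt]

theorem permGraph_isCohesive {n : ℕ} (σ : Equiv.Perm (Fin n)) : (permGraph σ).IsCohesive where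
  adj_trans i j k hij hjk := by
    simp only [permGraph_adj_of_lt σ hij, permGraph_adj_of_lt σ hjk,
      permGraph_adj_of_lt σ (hij.trans hjk)]
    exact fun hji hkj => hkj.trans hji
  adj_or_adj_of_adj i j k hij hjk := by
    simp only [permGraph_adj_of_lt σ hij, permGraph_adj_of_lt σ hjk,
      permGraph_adj_of_lt σ (hij.trans hjk)]
    exact fun hki => (lt_or_ge (σ.symm j) (σ.symm i)).imp_right hki.trans_le

theorem SimpleGraph.IsCohesive.exists_eq_permGraph {n : ℕ} {H : SimpleGraph (Fin n)}
    (hH : H.IsCohesive) : ∃ σ : Equiv.Perm (Fin n), H = permGraph σ := by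
  have : IsStrictTotalOrder (Fin n) H.ListedBefore := hH.isStrictTotalOrder_listedBefore
  obtain ⟨f, hf⟩ := exists_equiv_fin_lt_iff_of_isStrictTotalOrder (Fintype.card_fin n)
    H.ListedBefore
  refine ⟨f.symm, SimpleGraph.ext <| funext₂ fun i j => propext ?_⟩
  rcases lt_trichotomy i j with h | rfl | h
  · rw [permGraph_adj_of_lt _ h, Equiv.symm_symm, ← hf, SimpleGraph.listedBefore_iff_adj_of_lt h]
  · simp
  · rw [H.adj_comm, (permGraph _).adj_comm, permGraph_adj_of_lt _ h, Equiv.symm_symm, ← hf,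
      SimpleGraph.listedBefore_iff_adj_of_lt h]

theorem hasCohesiveOrder_iff_exists_isCohesive_comap {V : Type*} [Fintype V]
    (G : SimpleGraph V) :
    HasCohesiveOrder G ↔ ∃ e : V ≃ Fin (Fintype.card V), (G.comap e.symm).IsCohesive :=
  ⟨fun ⟨e, h₁, h₂⟩ => ⟨e, h₁, h₂⟩, fun ⟨e, h₁, h₂⟩ => ⟨e, h₁, h₂⟩⟩

/-- A finite simple graph is a permutation graph if and only if it has a cohesive
order. -/
theorem isPermutationGraph_iff_hasCohesiveOrder {V : Type*} [Fintype V]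
    (G : SimpleGraph V) :
    IsPermutationGraph G ↔ HasCohesiveOrder G := by
  rw [hasCohesiveOrder_iff_exists_isCohesive_comap]
  constructor
  · rintro ⟨σ, ⟨φ⟩⟩
    refine ⟨φ.toEquiv, ?_⟩
    rw [show G.comap φ.toEquiv.symm = permGraph σ from φ.symm.toEmbedding.comap_eq]
    exact permGraph_isCohesive σ
  · rintro ⟨e, he⟩
    obtain ⟨σ, hσ⟩ := he.exists_eq_permGraph
    exact ⟨σ, ⟨hσ ▸ (SimpleGraph.Iso.comap e.symm G).symm⟩⟩
end

section
/- Let G be a graph on [n] with cohesive order given by the natural labeling and associated poset P (i ≺ j iff i < j and {i,j} ∈ E(G)). Suppose i_1, j_1 ∈ V(G) satisfy i_1 ≺ j_1 and {s ∈ [n] : i_1 ≺ s} = {j_1}. Then N_G[i_1] ⊆ N_G[j_1], and every maximal independent set of G∖{j_1} is a maximal independent set of G; in particular, j_1 is a shedding vertex of G. -/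
open MvPolynomial
open scoped Classical
set_option synthInstance.maxHeartbeats 1000000
set_option maxHeartbeats 1000000
set_option linter.unusedVariables false

/-- Conditions (i) and (ii) of a cohesive order, for a graph whose vertex set is `Fin n`
with its natural labeling. -/
def CohesiveNat {n : ℕ} (G : SimpleGraph (Fin n)) : Prop :=
  (∀ i j k : Fin n, i < j → j < k → G.Adj i j → G.Adj j k → G.Adj i k) ∧
  (∀ i j k : Fin n, i < j → j < k → G.Adj i k → (G.Adj i j ∨ G.Adj j k))

/-- The strict order `i ≺ j ↔ i < j ∧ {i,j} ∈ E(G)` associated to a cohesive order. -/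
def Prec {n : ℕ} (G : SimpleGraph (Fin n)) (i j : Fin n) : Prop := i < j ∧ G.Adj i j

/-- `F` is an independent set of `G`. -/
def IsIndep {V : Type*} (G : SimpleGraph V) (F : Set V) : Prop :=
  ∀ ⦃u⦄, u ∈ F → ∀ ⦃v⦄, v ∈ F → ¬ G.Adj u v

/-- `F` is a maximal independent set of the induced subgraph of `G` on `A`. -/
def IsMaxIndepOn {V : Type*} (G : SimpleGraph V) (A F : Set V) : Prop :=
  F ⊆ A ∧ IsIndep G F ∧ ∀ F', F ⊆ F' → F' ⊆ A → IsIndep G F' → F' = F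

/-- The closed neighborhood `N_G[v]` of a vertex. -/
def closedNbhd {V : Type*} (G : SimpleGraph V) (v : V) : Set V := insert v {u | G.Adj v u}

/-- Let `G` be a graph on `[n]` whose natural labeling is a cohesive order, with
associated poset `i ≺ j ↔ i < j ∧ {i,j} ∈ E(G)`. If `i₁ ≺ j₁` and `j₁` is the only
element above `i₁`, then `N_G[i₁] ⊆ N_G[j₁]` and every maximal independent set of
`G ∖ {j₁}` is a maximal independent set of `G`; in particular `j₁` is a shedding
vertex of `G`. -/
theorem shedding_vertex_of_unique_upper {n : ℕ} (G : SimpleGraph (Fin n))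
    (hcoh : CohesiveNat G) (i1 j1 : Fin n)
    (h1 : Prec G i1 j1) (h2 : {s : Fin n | Prec G i1 s} = {j1}) :
    closedNbhd G i1 ⊆ closedNbhd G j1 ∧
    ∀ F : Set (Fin n), IsMaxIndepOn G ({j1}ᶜ) F → IsMaxIndepOn G Set.univ F := by
  obtain ⟨hlt, hadj⟩ := h1
  have hup : ∀ s, i1 < s → G.Adj i1 s → s = j1 := by
    intro s hs ha
    have : s ∈ ({j1} : Set (Fin n)) := h2 ▸ (show s ∈ {s | Prec G i1 s} from ⟨hs, ha⟩)
    exact this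
  have hsub : closedNbhd G i1 ⊆ closedNbhd G j1 := by
    intro u hu
    rcases hu with rfl | hu
    · exact Or.inr hadj.symm
    · simp only [Set.mem_setOf_eq] at hu
      rcases lt_trichotomy u i1 with h | h | h
      · exact Or.inr ((hcoh.1 u i1 j1 h hlt hu.symm hadj).symm)
      · exact absurd hu (by simp [h])
      · exact Or.inl (hup u h hu)
  refine ⟨hsub, ?_⟩
  rintro F ⟨hFA, hFind, hFmax⟩
  refine ⟨Set.subset_univ F, hFind, ?_⟩
  intro F' hFF' hF'univ hF'ind
  apply Set.Subset.antisymm _ hFF'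
  intro v hv
  by_contra hvF
  by_cases hvj : v = j1
  · subst hvj
    have hi1F : i1 ∉ F := fun h => hF'ind (hFF' h) hv hadj
    have hFi1sub : insert i1 F ⊆ ({v}ᶜ : Set (Fin n)) := by
      intro x hx
      rcases hx with rfl | hx
      · exact fun h => hadj.ne (Set.mem_singleton_iff.mp h)
      · exact hFA hx
    have hind : IsIndep G (insert i1 F) := by
      intro a ha b hb hab
      rcases ha with rfl | ha
      · rcases hb with rfl | hb
        · exact G.irrefl hab
        · have hbN : b ∈ closedNbhd G v := hsub (Or.inr hab)
          rcases hbN with rfl | hbN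
          · exact hFA hb rfl
          · exact hF'ind hv (hFF' hb) hbN
      · rcases hb with rfl | hb
        · have haN : a ∈ closedNbhd G v := hsub (Or.inr hab.symm)
          rcases haN with rfl | haN
          · exact hFA ha rfl
          · exact hF'ind (hFF' ha) hv haN.symm
        · exact hFind ha hb hab
    have heq := hFmax (insert i1 F) (Set.subset_insert _ _) hFi1sub hind
    exact hi1F (heq ▸ Set.mem_insert i1 F)
  · have heq : insert v F = F := hFmax (insert v F) (Set.subset_insert _ _)
      (by
        intro x hx
        rcases hx with rfl | hx
        · exact fun h => hvj (Set.mem_singleton_iff.mp h)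
        · exact hFA hx)
      (by
        intro a ha b hb
        exact hF'ind (by rcases ha with rfl | ha; exact hv; exact hFF' ha)
          (by rcases hb with rfl | hb; exact hv; exact hFF' hb))
    exact hvF (heq ▸ Set.mem_insert v F)
end

section
/- Let G be a Cohen-Macaulay permutation graph and J(G) its cover ideal. Then J(G) satisfies the strong persistence property, i.e., J(G)^{k+1} : J(G) = J(G)^k for all k ≥ 1. -/
open MvPolynomial
open scoped Classical
set_option synthInstance.maxHeartbeats 1000000
set_option maxHeartbeats 1000000
set_option linter.unusedVariables false

/-- `C` is a vertex cover of `G`. -/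
def IsVertexCover {V : Type*} (G : SimpleGraph V) (C : Set V) : Prop :=
  ∀ ⦃u v⦄, G.Adj u v → u ∈ C ∨ v ∈ C

/-- `C` is a minimal vertex cover of `G`. -/
def IsMinimalVertexCover {V : Type*} (G : SimpleGraph V) (C : Set V) : Prop :=
  IsVertexCover G C ∧ ∀ D ⊆ C, IsVertexCover G D → D = C

/-- `G` is unmixed: all minimal vertex covers have the same cardinality. -/
def Unmixed {V : Type*} (G : SimpleGraph V) : Prop :=
  ∀ C D : Set V, IsMinimalVertexCover G C → IsMinimalVertexCover G D → C.ncard = D.ncard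

/-- The edge ideal `I(G)` of a graph. -/
noncomputable def edgeIdeal (K : Type*) [Field K] {V : Type*} (G : SimpleGraph V) :
    Ideal (MvPolynomial V K) :=
  Ideal.span {p | ∃ u v, G.Adj u v ∧ p = X u * X v}

/-- The irrelevant (graded maximal) ideal `(x_1, …, x_n)` of the polynomial ring. -/
noncomputable def irrelevantIdeal (K : Type*) [Field K] {V : Type*} :
    Ideal (MvPolynomial V K) :=
  Ideal.span (Set.range X)

/-- `S/I` is a Cohen-Macaulay ring, where `S` is a polynomial ring over a field and `I` a
graded ideal: there is a regular sequence contained in the graded maximal ideal whose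
length equals the Krull dimension of `S/I`. -/
def QuotIsCM (K : Type*) [Field K] {V : Type*} (I : Ideal (MvPolynomial V K)) : Prop :=
  ∃ (d : ℕ) (f : Fin d → (MvPolynomial V K ⧸ I)),
    (∀ i, f i ∈ (irrelevantIdeal K).map (Ideal.Quotient.mk I)) ∧
    RingTheory.Sequence.IsRegular (MvPolynomial V K ⧸ I) (List.ofFn f) ∧
    (d : WithBot (WithTop ℕ)) = ringKrullDim (MvPolynomial V K ⧸ I)

/-- The cover ideal `J(G)` of a graph: generated by the monomials whose support is a
vertex cover. -/
noncomputable def coverIdeal (K : Type*) [Field K] {V : Type*} (G : SimpleGraph V) :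
    Ideal (MvPolynomial V K) :=
  Ideal.span {p | ∃ C : Finset V, IsVertexCover G ↑C ∧ p = ∏ i ∈ C, X i}

/-! `J(G)^k` is a monomial ideal spanned by the monomials `x^(χ_{C_1} + ⋯ + χ_{C_k})` with `C_i`
vertex covers, so membership in it and in `J(G)^{k+1} : J(G)` is decided monomial by monomial.
If `x^a J(G) ⊆ J(G)^{k+1}`, the weight `w = (k - a)₊` has total at most `k` on every clique.
A permutation graph is the comparability graph of a strict order (the intersection of two linear
orders), so its cliques are chains, and a weighted Mirsky argument splits `w` into `k` antichains.
Their complements are `k` vertex covers witnessing `x^a ∈ J(G)^k`. -/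

section

variable {V : Type*}

noncomputable def indicatorExp (C : Finset V) : V →₀ ℕ := ∑ i ∈ C, Finsupp.single i 1

lemma indicatorExp_apply (C : Finset V) (v : V) :
    indicatorExp C v = if v ∈ C then 1 else 0 := by
  simp [indicatorExp, Finsupp.finsetSum_apply, Finsupp.single_apply]

lemma prod_X_eq_monomial_indicatorExp (K : Type*) [Field K] (C : Finset V) :
    (∏ i ∈ C, X i : MvPolynomial V K) = monomial (indicatorExp C) 1 := by
  simp only [indicatorExp, monomial_sum_one, X]

def DominatesCoverSum (G : SimpleGraph V) (m : ℕ) (d : V →₀ ℕ) : Prop :=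
  ∃ C : Fin m → Finset V, (∀ i, IsVertexCover G ↑(C i)) ∧ ∑ i, indicatorExp (C i) ≤ d

lemma coverIdeal_pow_eq_span (K : Type*) [Field K] (G : SimpleGraph V) (m : ℕ) :
    coverIdeal K G ^ m = Ideal.span ((fun d => monomial d (1 : K)) ''
      {d | ∃ C : Fin m → Finset V, (∀ i, IsVertexCover G ↑(C i)) ∧
        d = ∑ i, indicatorExp (C i)}) := by
  have hJ : coverIdeal K G = Ideal.span ((fun d => monomial d (1 : K)) ''
      {d | ∃ C : Finset V, IsVertexCover G ↑C ∧ d = indicatorExp C}) := by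
    simp_rw [coverIdeal, prod_X_eq_monomial_indicatorExp]
    congr 1
    ext p
    simp [eq_comm]
  rw [hJ, Ideal.span, Submodule.span_pow]
  congr 1
  ext p
  simp only [Set.mem_pow, Set.mem_image, Set.mem_ofPred_eq, List.prod_ofFn]
  constructor
  · rintro ⟨f, rfl⟩
    choose d hd hf using fun i => (f i).2
    choose C hC hdC using hd
    refine ⟨_, ⟨C, hC, rfl⟩, ?_⟩
    simp_rw [monomial_sum_one, ← hf, hdC]
  · rintro ⟨_, ⟨C, hC, rfl⟩, rfl⟩
    exact ⟨fun i => ⟨_, _, ⟨C i, hC i, rfl⟩, rfl⟩, (monomial_sum_one _ _).symm⟩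

lemma mem_coverIdeal_pow_iff {K : Type*} [Field K] {G : SimpleGraph V} {m : ℕ}
    {f : MvPolynomial V K} :
    f ∈ coverIdeal K G ^ m ↔ ∀ d ∈ f.support, DominatesCoverSum G m d := by
  rw [coverIdeal_pow_eq_span, mem_ideal_span_monomial_image]
  simp [DominatesCoverSum]

open Finset

section Covers

variable {G : SimpleGraph V}

lemma IsVertexCover.card_sdiff_le_one {C T : Finset V} (hC : IsVertexCover G ↑C)
    (hT : G.IsClique (T : Set V)) : #(T \ C) ≤ 1 := by
  refine card_le_one.2 fun x hx y hy => by_contra fun hxy => ?_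
  simp only [mem_sdiff] at hx hy
  rcases hC (hT hx.1 hy.1 hxy) with h | h
  exacts [hx.2 h, hy.2 h]

lemma mul_card_le_sum_sum_indicatorExp_add {m : ℕ} {C : Fin m → Finset V}
    (hC : ∀ i, IsVertexCover G ↑(C i)) {T : Finset V} (hT : G.IsClique (T : Set V)) :
    m * #T ≤ ∑ v ∈ T, (∑ i, indicatorExp (C i)) v + m := by
  have hcount : ∑ v ∈ T, (∑ i, indicatorExp (C i)) v = ∑ i, #(T ∩ C i) := by
    simp_rw [Finsupp.finsetSum_apply, indicatorExp_apply]
    rw [sum_comm]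
    simp
  have hi : ∀ i, #T ≤ #(T ∩ C i) + 1 := fun i => by
    have := card_inter_add_card_sdiff T (C i)
    have := (hC i).card_sdiff_le_one hT
    omega
  calc m * #T = ∑ i : Fin m, #T := by simp
    _ ≤ ∑ i, (#(T ∩ C i) + 1) := sum_le_sum fun i _ => hi i
    _ = _ := by rw [sum_add_distrib, hcount]; simp

lemma sum_indicatorExp_apply_le {m : ℕ} (C : Fin m → Finset V) (v : V) :
    (∑ i, indicatorExp (C i)) v ≤ m := by
  simp only [Finsupp.finsetSum_apply, indicatorExp_apply]
  simpa using card_filter_le (univ : Finset (Fin m)) (fun i => v ∈ C i)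

lemma sum_tsub_le_of_forall_dominatesCoverSum_add [Fintype V] {k : ℕ} {a : V →₀ ℕ}
    (H : ∀ C : Finset V, IsVertexCover G ↑C → DominatesCoverSum G (k + 1) (a + indicatorExp C))
    {T : Finset V} (hT : G.IsClique (T : Set V)) : ∑ v ∈ T, (k - a v) ≤ k := by
  by_cases hTa : ∀ v ∈ T, k ≤ a v
  · simp [sum_eq_zero fun v hv => Nat.sub_eq_zero_of_le (hTa v hv)]
  obtain ⟨j, hjT, hjk⟩ : ∃ j ∈ T, a j < k := by simpa using hTa
  -- Test against the cover missing only `j`: each of the resulting `k + 1` covers misses at most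
  -- one vertex of `T`, while together they contain `j` at most `a j` times and any other `v`
  -- at most `min (a v) k + 1` times.
  have hcov : IsVertexCover G ↑(univ.erase j) := fun u v huv => by
    by_cases hu : u = j
    · exact .inr (by simpa [← hu] using huv.ne.symm)
    · exact .inl (by simpa using hu)
  obtain ⟨C, hC, hle⟩ := H _ hcov
  set s := ∑ i, indicatorExp (C i)
  have hs : ∀ v, s v ≤ a v + if v = j then 0 else 1 := fun v => by
    simpa [indicatorExp_apply, eq_comm] using hle v
  have hsk : ∀ v, s v ≤ k + 1 := sum_indicatorExp_apply_le C
  have hv : ∀ v ∈ T.erase j, s v + (k - a v) ≤ k + 1 := fun v hv => by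
    have := hs v
    rw [if_neg (ne_of_mem_erase hv)] at this
    have := hsk v
    omega
  have hj : s j + (k - a j) ≤ k := by
    have := hs j
    rw [if_pos rfl] at this
    omega
  have hupper : ∑ v ∈ T, (s v + (k - a v)) ≤ #(T.erase j) * (k + 1) + k := by
    rw [← sum_erase_add _ _ hjT]
    exact add_le_add (by simpa using sum_le_sum hv) hj
  have hlower : (k + 1) * #T ≤ ∑ v ∈ T, s v + (k + 1) :=
    mul_card_le_sum_sum_indicatorExp_add hC hT
  rw [← card_erase_add_one hjT] at hlower
  rw [sum_add_distrib] at hupper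
  nlinarith

end Covers

lemma exists_height_of_chain_weight_le [Fintype V] (r : V → V → Prop) [IsStrictOrder V r]
    (w : V → ℕ) {k : ℕ} (hw : ∀ T : Finset V, IsChain r (T : Set V) → ∑ v ∈ T, w v ≤ k) :
    ∃ h : V → ℕ, (∀ u v, r u v → h u + w u ≤ h v) ∧ ∀ v, h v + w v ≤ k := by
  let chainsBelow (v : V) : Finset (Finset V) := {T | IsChain r (T : Set V) ∧ ∀ x ∈ T, r x v}
  let h (v : V) : ℕ := (chainsBelow v).sup fun T => ∑ x ∈ T, w x
  have heaviest (v : V) : ∃ T : Finset V, IsChain r ((insert v T : Finset V) : Set V) ∧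
      (∀ x ∈ T, r x v) ∧ h v + w v = ∑ x ∈ insert v T, w x := by
    obtain ⟨T, hT, hTsup⟩ := exists_mem_eq_sup (chainsBelow v) ⟨∅, by simp [chainsBelow]⟩
      fun T => ∑ x ∈ T, w x
    simp only [chainsBelow, mem_filter, mem_univ, true_and] at hT
    have hvT : v ∉ T := fun hv => irrefl v (hT.2 v hv)
    refine ⟨T, ?_, hT.2, by simp only [h, sum_insert hvT, hTsup, add_comm]⟩
    rw [coe_insert]
    exact hT.1.insert fun x hx _ => .inr (hT.2 x hx)
  refine ⟨h, fun u v huv => ?_, fun v => ?_⟩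
  · obtain ⟨T, hchain, hbelow, hsum⟩ := heaviest u
    rw [hsum]
    refine le_sup (f := fun T => ∑ x ∈ T, w x) (mem_filter.2 ⟨mem_univ _, hchain, ?_⟩)
    intro x hx
    rcases mem_insert.1 hx with rfl | hx
    exacts [huv, _root_.trans (hbelow x hx) huv]
  · obtain ⟨T, hchain, -, hsum⟩ := heaviest v
    exact hsum ▸ hw _ hchain

lemma card_fin_filter_mem_Ico (k l w : ℕ) (h : l + w ≤ k) :
    #{j : Fin k | l ≤ j ∧ j < l + w} = w := by
  rw [card_filter, Fin.sum_univ_eq_sum_range (fun j => if l ≤ j ∧ j < l + w then 1 else 0),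
    ← card_filter]
  convert Nat.card_Ico l (l + w) using 2
  · ext j; simp only [mem_filter, mem_range, mem_Ico]; omega
  · omega

def IsComparabilityGraph (G : SimpleGraph V) : Prop :=
  ∃ r : V → V → Prop, IsStrictOrder V r ∧ ∀ u v, G.Adj u v ↔ r u v ∨ r v u

section Comparability

variable {G : SimpleGraph V}

lemma isComparabilityGraph_permGraph {n : ℕ} (σ : Equiv.Perm (Fin n)) :
    IsComparabilityGraph (permGraph σ) := by
  refine ⟨fun i j => i < j ∧ σ.symm j < σ.symm i, ?_, fun i j => Iff.rfl⟩
  exact { irrefl := fun i h => h.1.false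
          trans := fun i j l hij hjl => ⟨hij.1.trans hjl.1, hjl.2.trans hij.2⟩ }

lemma IsComparabilityGraph.of_embedding {W : Type*} {H : SimpleGraph W} (f : G ↪g H)
    (hH : IsComparabilityGraph H) : IsComparabilityGraph G := by
  obtain ⟨r, hr, hadj⟩ := hH
  exact ⟨f ⁻¹'o r, inferInstance, fun u v => f.map_adj_iff.symm.trans (hadj _ _)⟩

lemma IsPermutationGraph.isComparabilityGraph [Fintype V] (hG : IsPermutationGraph G) :
    IsComparabilityGraph G := by
  obtain ⟨σ, ⟨φ⟩⟩ := hG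
  exact (isComparabilityGraph_permGraph σ).of_embedding φ.toEmbedding

lemma IsComparabilityGraph.dominatesCoverSum_of_clique_weight_le [Fintype V]
    (hG : IsComparabilityGraph G) {k : ℕ} {a : V →₀ ℕ}
    (ha : ∀ T : Finset V, G.IsClique (T : Set V) → ∑ v ∈ T, (k - a v) ≤ k) :
    DominatesCoverSum G k a := by
  obtain ⟨r, hr, hadj⟩ := hG
  obtain ⟨h, hmono, hk⟩ := exists_height_of_chain_weight_le r (fun v => k - a v)
    fun T hT => ha T (hT.imp fun _ _ hxy => (hadj _ _).2 hxy)
  -- Vertex `v` occupies the layers `j ∈ [h v, h v + (k - a v))`; each layer is an antichain, so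
  -- its complement is a vertex cover, and `v` lies in `min (a v) k` of these complements.
  let layer (j : ℕ) (v : V) : Prop := h v ≤ j ∧ j < h v + (k - a v)
  refine ⟨fun j : Fin k => {v | ¬ layer j v}, fun j u v huv => ?_, fun v => ?_⟩
  · have key : ∀ x y, r x y → ¬ layer j x ∨ ¬ layer j y := fun x y hxy => by
      have := hmono x y hxy
      simp only [layer]
      omega
    simpa [or_comm] using (hadj u v).1 huv |>.imp (key u v) (key v u)
  · have hlayer : #{j : Fin k | layer j v} = k - a v := card_fin_filter_mem_Ico _ _ _ (hk v)
    have hsplit := card_filter_add_card_filter_not (s := univ) (fun j : Fin k => layer j v)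
    rw [card_univ, Fintype.card_fin] at hsplit
    simp only [Finsupp.finsetSum_apply, indicatorExp_apply, mem_filter, mem_univ, true_and]
    rw [← card_filter]
    omega

theorem IsComparabilityGraph.colon_coverIdeal_pow_succ [Fintype V] (K : Type*) [Field K]
    (hG : IsComparabilityGraph G) (k : ℕ) :
    Submodule.colon (coverIdeal K G ^ (k + 1)) (coverIdeal K G) = coverIdeal K G ^ k := by
  refine le_antisymm (fun f hf => ?_) fun f hf => Submodule.mem_colon.2 fun p hp => ?_
  · refine mem_coverIdeal_pow_iff.2 fun d hd => hG.dominatesCoverSum_of_clique_weight_le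
      fun T hT => sum_tsub_le_of_forall_dominatesCoverSum_add (fun C hC => ?_) hT
    have hC' : monomial (indicatorExp C) 1 ∈ coverIdeal K G :=
      Ideal.subset_span ⟨C, hC, (prod_X_eq_monomial_indicatorExp K C).symm⟩
    have hmul : f * monomial (indicatorExp C) 1 ∈ coverIdeal K G ^ (k + 1) :=
      Submodule.mem_colon.1 hf _ hC'
    refine mem_coverIdeal_pow_iff.1 hmul _ ?_
    simpa [coeff_mul_monomial] using hd
  · rw [smul_eq_mul, pow_succ]
    exact Ideal.mul_mem_mul hf hp

end Comparability

end

theorem coverIdeal_strong_persistence_general {n : ℕ} (K : Type*) [Field K]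
    (G : SimpleGraph (Fin n)) (hG : IsPermutationGraph G) :
    ∀ k : ℕ, 1 ≤ k →
      Submodule.colon ((coverIdeal K G) ^ (k + 1)) (coverIdeal K G) =
        (coverIdeal K G) ^ k :=
  fun k _ => hG.isComparabilityGraph.colon_coverIdeal_pow_succ K k

/-- The cover ideal of a Cohen-Macaulay permutation graph satisfies the strong
persistence property: `J(G)^{k+1} : J(G) = J(G)^k` for all `k ≥ 1`. -/
theorem coverIdeal_strong_persistence {n : ℕ} (K : Type*) [Field K]
    (G : SimpleGraph (Fin n)) (hG : IsPermutationGraph G)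
    (hCM : QuotIsCM K (edgeIdeal K G)) :
    ∀ k : ℕ, 1 ≤ k →
      Submodule.colon ((coverIdeal K G) ^ (k + 1)) (coverIdeal K G) =
        (coverIdeal K G) ^ k :=
  coverIdeal_strong_persistence_general K G hG
end
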